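/- Let a > 0, b > 0 and let γ be Gamma-distributed with shape b and rate a. Then lim_{p→∞} ( - log E[Q(√(p γ))] / log p ) = b. -/

import Mathlib

/-!
Substituting `y = p x` writes `E[Q(√(p γ))]` as `p^(-b) · L(a / p)`, where `L` is the Laplace
transform of `y ↦ Q(√y) y^(b-1) a^b / Γ(b)` on `(0, ∞)`; it is finite because
`Q(x) ≤ exp (-x²/2)` and `b > 0`. As `L` is antitone and positive, for `p ≥ 1` the value
`L(a / p)` is squeezed between `L(a) > 0` and `L(0) < ∞`, so `log L(a / p) / log p → 0` and only
the factor `p^(-b)` is visible on the logarithmic scale.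
-/

open MeasureTheory Real Filter

/-- The Gaussian Q-function. -/
noncomputable def gaussQ (x : ℝ) : ℝ :=
  (Real.sqrt (2 * Real.pi))⁻¹ * ∫ t in Set.Ioi x, Real.exp (-t ^ 2 / 2)

open Set ProbabilityTheory Topology

lemma setIntegral_Ioi_pos {f : ℝ → ℝ} {c : ℝ} (hf : ∀ y ∈ Ioi c, 0 < f y)
    (hint : IntegrableOn f (Ioi c)) : 0 < ∫ y in Ioi c, f y := by
  rw [setIntegral_pos_iff_support_of_nonneg_ae
    (ae_restrict_of_forall_mem measurableSet_Ioi fun y hy => (hf y hy).le) hint,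
    inter_eq_right.mpr fun y hy => Function.mem_support.mpr (hf y hy).ne']
  simp

lemma gaussQ_eq_setIntegral_gaussianPDFReal (x : ℝ) :
    gaussQ x = ∫ t in Ioi x, gaussianPDFReal 0 1 t := by
  simp [gaussQ, gaussianPDFReal_def, integral_const_mul]

lemma gaussQ_pos (x : ℝ) : 0 < gaussQ x := by
  rw [gaussQ_eq_setIntegral_gaussianPDFReal]
  exact setIntegral_Ioi_pos (fun t _ => gaussianPDFReal_pos 0 1 t one_ne_zero)
    (integrable_gaussianPDFReal 0 1).integrableOn

lemma gaussQ_antitone : Antitone gaussQ := fun x y hxy => by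
  simp only [gaussQ_eq_setIntegral_gaussianPDFReal]
  exact setIntegral_mono_set (integrable_gaussianPDFReal 0 1).integrableOn
    (ae_of_all _ (gaussianPDFReal_nonneg 0 1)) (Ioi_subset_Ioi hxy).eventuallyLE

/-- For `t ≥ x ≥ 0`, `t² ≥ x² + (t - x)²`: on `(x, ∞)` the standard normal density is at most
`exp (-x²/2)` times the normal density centred at `x`. -/
lemma gaussQ_le_exp {x : ℝ} (hx : 0 ≤ x) : gaussQ x ≤ exp (-x ^ 2 / 2) := by
  have hpdf : ∀ t ∈ Ioi x, gaussianPDFReal 0 1 t ≤ exp (-x ^ 2 / 2) * gaussianPDFReal x 1 t := by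
    intro t (ht : x < t)
    simp only [gaussianPDFReal_def, NNReal.coe_one, mul_one, sub_zero]
    rw [mul_left_comm, ← exp_add]
    gcongr
    nlinarith
  calc gaussQ x = ∫ t in Ioi x, gaussianPDFReal 0 1 t := gaussQ_eq_setIntegral_gaussianPDFReal x
    _ ≤ ∫ t in Ioi x, exp (-x ^ 2 / 2) * gaussianPDFReal x 1 t :=
      setIntegral_mono_on (integrable_gaussianPDFReal 0 1).integrableOn
        ((integrable_gaussianPDFReal x 1).const_mul _).integrableOn measurableSet_Ioi hpdf
    _ ≤ ∫ t, exp (-x ^ 2 / 2) * gaussianPDFReal x 1 t :=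
      setIntegral_le_integral ((integrable_gaussianPDFReal x 1).const_mul _)
        (ae_of_all _ fun t => mul_nonneg (exp_pos _).le (gaussianPDFReal_nonneg x 1 t))
    _ = exp (-x ^ 2 / 2) := by
      rw [integral_const_mul, integral_gaussianPDFReal_eq_one x one_ne_zero, mul_one]

lemma integrableOn_gaussQ_sqrt_mul_rpow {b : ℝ} (hb : 0 < b) :
    IntegrableOn (fun y => gaussQ (√y) * y ^ (b - 1)) (Ioi 0) := by
  refine (integrableOn_rpow_mul_exp_neg_mul_rpow (s := b - 1) (by linarith) one_pos
    (one_half_pos (α := ℝ))).mono' ?_ ?_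
  · exact ((gaussQ_antitone.measurable.comp continuous_sqrt.measurable).mul
      (measurable_id.pow_const _)).aestronglyMeasurable
  · refine ae_restrict_of_forall_mem measurableSet_Ioi fun y (hy : 0 < y) => ?_
    have hQ := gaussQ_le_exp (sqrt_nonneg y)
    rw [sq_sqrt hy.le] at hQ
    rw [norm_mul, norm_of_nonneg (gaussQ_pos _).le, norm_of_nonneg (rpow_pos_of_pos hy _).le,
      rpow_one, mul_comm, show -(1 / 2) * y = -y / 2 by ring]
    gcongr

section Laplace

noncomputable def laplaceIoi (g : ℝ → ℝ) (s : ℝ) : ℝ :=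
  ∫ y in Ioi 0, g y * exp (-(s * y))

variable {g : ℝ → ℝ}

lemma MeasureTheory.IntegrableOn.mul_exp_neg_mul (hg : IntegrableOn g (Ioi 0)) {s : ℝ}
    (hs : 0 ≤ s) :
    IntegrableOn (fun y => g y * exp (-(s * y))) (Ioi 0) := by
  refine hg.mul_bdd (c := 1) (by fun_prop) (ae_restrict_of_forall_mem measurableSet_Ioi ?_)
  intro y (hy : 0 < y)
  rw [norm_of_nonneg (exp_pos _).le, exp_le_one_iff, neg_nonpos]
  positivity

lemma laplaceIoi_antitoneOn (hg0 : ∀ y ∈ Ioi 0, 0 ≤ g y) (hg : IntegrableOn g (Ioi 0)) :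
    AntitoneOn (laplaceIoi g) (Ici 0) := by
  intro s (hs : 0 ≤ s) t (ht : 0 ≤ t) hst
  refine setIntegral_mono_on (hg.mul_exp_neg_mul ht) (hg.mul_exp_neg_mul hs) measurableSet_Ioi
    fun y (hy : 0 < y) => ?_
  gcongr
  exact hg0 y hy

lemma laplaceIoi_pos (hg0 : ∀ y ∈ Ioi 0, 0 < g y) (hg : IntegrableOn g (Ioi 0)) {s : ℝ}
    (hs : 0 ≤ s) : 0 < laplaceIoi g s :=
  setIntegral_Ioi_pos (fun y hy => mul_pos (hg0 y hy) (exp_pos _)) (hg.mul_exp_neg_mul hs)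

lemma integral_comp_mul_rpow_mul_exp_eq (h : ℝ → ℝ) (a b : ℝ) {p : ℝ} (hp : 0 < p) :
    ∫ x in Ioi 0, h (p * x) * (x ^ (b - 1) * exp (-(a * x))) =
      p ^ (-b) * laplaceIoi (fun y => h y * y ^ (b - 1)) (a / p) := by
  have hsub := integral_comp_mul_left_Ioi
    (fun y => h y * ((y / p) ^ (b - 1) * exp (-(a * (y / p))))) 0 hp
  simp only [mul_div_cancel_left₀ _ hp.ne', mul_zero, smul_eq_mul] at hsub
  rw [hsub, laplaceIoi, ← integral_const_mul, ← integral_const_mul]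
  refine setIntegral_congr_fun measurableSet_Ioi fun y (hy : 0 < y) => ?_
  rw [div_rpow hy.le hp.le, rpow_sub_one hp.ne', rpow_neg hp.le, mul_comm a, div_mul_eq_mul_div]
  field_simp

end Laplace

lemma tendsto_log_div_log_atTop_of_mem_Icc {f : ℝ → ℝ} {m M : ℝ} (hm : 0 < m)
    (hf : ∀ᶠ p in atTop, f p ∈ Icc m M) :
    Tendsto (fun p => log (f p) / log p) atTop (𝓝 0) := by
  simp only [div_eq_mul_inv]
  refine isBoundedUnder_le_mul_tendsto_zero
    (isBoundedUnder_of_eventually_le (a := max |log m| |log M|) ?_)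
    (tendsto_inv_atTop_zero.comp tendsto_log_atTop)
  filter_upwards [hf] with p ⟨hmp, hpM⟩
  exact abs_le_max_abs_abs (log_le_log hm hmp) (log_le_log (hm.trans_le hmp) hpM)

theorem tendsto_log_integral_comp_mul_div_log_atTop {h : ℝ → ℝ} {a b : ℝ} (ha : 0 ≤ a)
    (hpos : ∀ y ∈ Ioi 0, 0 < h y) (hint : IntegrableOn (fun y => h y * y ^ (b - 1)) (Ioi 0)) :
    Tendsto (fun p => log (∫ x in Ioi 0, h (p * x) * (x ^ (b - 1) * exp (-(a * x)))) / log p)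
      atTop (𝓝 (-b)) := by
  set L := laplaceIoi fun y => h y * y ^ (b - 1)
  have hgpos : ∀ y ∈ Ioi 0, 0 < h y * y ^ (b - 1) :=
    fun y hy => mul_pos (hpos y hy) (rpow_pos_of_pos hy _)
  have hLpos : ∀ s ∈ Ici 0, 0 < L s := fun s hs => laplaceIoi_pos hgpos hint hs
  have hL : ∀ᶠ p in atTop, L (a / p) ∈ Icc (L a) (L 0) := by
    filter_upwards [eventually_ge_atTop 1] with p hp
    have hap : a / p ∈ Icc 0 a := ⟨by positivity, div_le_self ha hp⟩
    have hanti := laplaceIoi_antitoneOn (fun y hy => (hgpos y hy).le) hint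
    exact ⟨hanti hap.1 ha hap.2, hanti self_mem_Ici hap.1 hap.1⟩
  have hcov : ∀ p > 0, ∫ x in Ioi 0, h (p * x) * (x ^ (b - 1) * exp (-(a * x))) =
      p ^ (-b) * L (a / p) := fun p hp => integral_comp_mul_rpow_mul_exp_eq h a b hp
  have hsplit : ∀ᶠ p in atTop, -b + log (L (a / p)) / log p =
      log (∫ x in Ioi 0, h (p * x) * (x ^ (b - 1) * exp (-(a * x)))) / log p := by
    filter_upwards [eventually_gt_atTop 1] with p hp
    have hp0 : 0 < p := one_pos.trans hp
    rw [hcov p hp0, log_mul (rpow_pos_of_pos hp0 _).ne'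
      (hLpos _ (div_nonneg ha hp0.le)).ne', log_rpow hp0]
    field_simp [(log_pos hp).ne']
  simpa using (tendsto_const_nhds.add (tendsto_log_div_log_atTop_of_mem_Icc
    (hLpos a ha) hL)).congr' hsplit

theorem stmt14 (a b : ℝ) (ha : 0 < a) (hb : 0 < b) :
    Tendsto
      (fun p : ℝ =>
        -Real.log (∫ x in Set.Ioi (0 : ℝ),
            gaussQ (Real.sqrt (p * x)) *
              (a ^ b * x ^ (b - 1) * Real.exp (-(a * x)) / Real.Gamma b)) / Real.log p)
      atTop (nhds b) := by
  have hc : 0 < a ^ b / Gamma b := div_pos (rpow_pos_of_pos ha b) (Gamma_pos_of_pos hb)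
  have hint : IntegrableOn (fun y => gaussQ (√y) * (a ^ b / Gamma b) * y ^ (b - 1)) (Ioi 0) :=
    IntegrableOn.congr_fun ((integrableOn_gaussQ_sqrt_mul_rpow hb).const_mul (a ^ b / Gamma b))
      (fun y _ => by ring) measurableSet_Ioi
  have hlim := (tendsto_log_integral_comp_mul_div_log_atTop ha.le
    (fun y _ => mul_pos (gaussQ_pos (√y)) hc) hint).neg
  rw [neg_neg] at hlim
  refine hlim.congr fun p => ?_
  rw [neg_div]
  congr 4 with x
  ring
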